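/- Let R1 : K1 → K2 and R2 : K2 → K3 be closed relations between formal contexts, with associated bonds B1(g) := R1(g)' and B2(h) := R2(h)'. Then: (i) for every A ⊆ G1, R1(A)' = ⋂_{a ∈ A} B1(a) = (B1)_•(A); and (ii) for every g ∈ G1, (B2)_•(B1(g)') = ((R2 ∘ R1)(g))', where (R2 ∘ R1)(g) = cl(R2(R1(g))). Hence the bond associated to R2 ∘ R1 is the bond composite of B1 and B2. -/

import Mathlib

open Set

/-- A formal context `(G, M, I)`: a set of objects, a set of attributes,
and an incidence relation between them. -/
structure FormalContext where
  G : Type*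
  M : Type*
  I : G → M → Prop

namespace FormalContext

variable (K : FormalContext)

/-- `A'` for a set of objects `A ⊆ G`. -/
def polarG (A : Set K.G) : Set K.M := upperPolar K.I A

/-- `B'` for a set of attributes `B ⊆ M`. -/
def polarM (B : Set K.M) : Set K.G := lowerPolar K.I B

/-- The closure `cl(A) = A''` of a set of objects. -/
def clG (A : Set K.G) : Set K.G := K.polarM (K.polarG A)

/-- The closure `cl(B) = B''` of a set of attributes. -/
def clM (B : Set K.M) : Set K.M := K.polarG (K.polarM B)

/-- A set of objects is closed when it equals its closure. -/
def ClosedG (A : Set K.G) : Prop := K.clG A = A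

/-- A set of attributes is closed when it equals its closure. -/
def ClosedM (B : Set K.M) : Prop := K.clM B = B

/-- The dual context `K* = (M, G, I†)`. -/
def dual : FormalContext := ⟨K.M, K.G, fun m g => K.I g m⟩

/-- The direct product `K1 ⊗ K2` of formal contexts (Ganter–Wille). -/
def dprod (K1 K2 : FormalContext) : FormalContext :=
  ⟨K1.G × K2.G, K1.M × K2.M, fun g m => K1.I g.1 m.1 ∨ K2.I g.2 m.2⟩

end FormalContext

/-- The trivial context `I = ({⋆},{⋆},≠)`. -/
def trivCxt : FormalContext := ⟨PUnit, PUnit, fun a b => a ≠ b⟩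

/-- The image `R(S)` of a set under a relation. -/
def relImage {X Y : Type*} (R : X → Y → Prop) (S : Set X) : Set Y :=
  {y | ∃ x ∈ S, R x y}

/-- `R^•(T) = {x | R(x) ⊆ T}`. -/
def relDot {X Y : Type*} (R : X → Y → Prop) (T : Set Y) : Set X :=
  {x | ∀ y, R x y → y ∈ T}

/-- `R_•(S) = {y | ∀ x ∈ S, R(x,y)}`. -/
def relLower {X Y : Type*} (R : X → Y → Prop) (S : Set X) : Set Y :=
  {y | ∀ x ∈ S, R x y}

/-- A closed relation `K1 → K2`: each row `R(g)` is closed in `K2` and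
`R^•` preserves closed sets. -/
structure IsClosedRel (K1 K2 : FormalContext) (R : K1.G → K2.G → Prop) : Prop where
  row_closed : ∀ g : K1.G, K2.ClosedG (relImage R {g})
  dot_closed : ∀ Y : Set K2.G, K2.ClosedG Y → K1.ClosedG (relDot R Y)

/-- Composition of closed relations: `(S ∘ R)(g) := cl(S(R(g)))`, closure in `K`. -/
def relComp {X Y : Type*} (K : FormalContext) (S : Y → K.G → Prop) (R : X → Y → Prop) :
    X → K.G → Prop :=
  fun g h => h ∈ K.clG (relImage S (relImage R {g}))

/-- Composition on the attribute side: `(S ∘ R)(m) := cl(S(R(m)))`, closure on the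
attribute side of `K`. -/
def relCompM {X Y : Type*} (K : FormalContext) (S : Y → K.M → Prop) (R : X → Y → Prop) :
    X → K.M → Prop :=
  fun m n => n ∈ K.clM (relImage S (relImage R {m}))

/-- The identity closed relation on `K`: `g ↦ cl({g})`. -/
def idClosedRel (K : FormalContext) : K.G → K.G → Prop := fun g h => h ∈ K.clG {g}

/-- A Chu correspondence `(R,S) : K1 → K2`. -/
structure IsChu (K1 K2 : FormalContext) (R : K1.G → K2.G → Prop) (S : K2.M → K1.M → Prop) :
    Prop where
  extent_closed : ∀ g : K1.G, K2.ClosedG (relImage R {g})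
  intent_closed : ∀ m : K2.M, K1.ClosedM (relImage S {m})
  adj : ∀ (g : K1.G) (m : K2.M),
    (∀ h ∈ relImage R {g}, K2.I h m) ↔ (∀ n ∈ relImage S {m}, K1.I g n)

/-- The intent relation `R*(m) := (R^•(m'))'` of a (closed) relation `R`. -/
def starRel (K1 K2 : FormalContext) (R : K1.G → K2.G → Prop) : K2.M → K1.M → Prop :=
  fun m n => n ∈ K1.polarG (relDot R (K2.polarM {m}))

/-- A bond from `K1` to `K2`: a relation `B ⊆ G1 × M2` with closed rows and columns. -/
structure IsBond (K1 K2 : FormalContext) (B : K1.G → K2.M → Prop) : Prop where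
  row_closed : ∀ g : K1.G, K2.ClosedM (relImage B {g})
  col_closed : ∀ m : K2.M, K1.ClosedG {g | B g m}

/-- The tensor `(R1 ⊗ R2)(g1,g2) := cl(R1(g1) × R2(g2))` of relations, closure in `K3 ⊗ K4`. -/
def tensorRelMor (K3 K4 : FormalContext) {X Y : Type*}
    (R1 : X → K3.G → Prop) (R2 : Y → K4.G → Prop) :
    X × Y → (K3.dprod K4).G → Prop :=
  fun p q => q ∈ (K3.dprod K4).clG (relImage R1 {p.1} ×ˢ relImage R2 {p.2})

/-- The concept of `K` generated by a set of objects `A`: `(cl(A), A')`. -/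
def conceptOfSet (K : FormalContext) (A : Set K.G) : Concept K.G K.M K.I where
  extent := K.clG A
  intent := K.polarG A
  upperPolar_extent := upperPolar_lowerPolar_upperPolar K.I A
  lowerPolar_intent := rfl

/-- The sup-lattice map `ℬ(R)` on concept lattices induced by a relation:
`(A,A') ↦ (cl(R(A)), R(A)')`. -/
def conceptMap (K1 K2 : FormalContext) (R : K1.G → K2.G → Prop) :
    Concept K1.G K1.M K1.I → Concept K2.G K2.M K2.I :=
  fun c => conceptOfSet K2 (relImage R c.extent)

/-- The incidence relation of the context whose concept lattice is the concept tensor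
`V1 ⊗ V2`: `(x,y) ∇ (w,z) iff x ≤ w or y ≤ z`. -/
def tensorRel (V1 V2 : Type*) [CompleteLattice V1] [CompleteLattice V2] :
    V1 × V2 → V1 × V2 → Prop :=
  fun p q => p.1 ≤ q.1 ∨ p.2 ≤ q.2

/-- The concept tensor `V1 ⊗ V2` of complete lattices (Wille's tensor product). -/
abbrev ConceptTensor (V1 V2 : Type*) [CompleteLattice V1] [CompleteLattice V2] :=
  Concept (V1 × V2) (V1 × V2) (tensorRel V1 V2)

/-- The tensorial operation `x ⊼ y`: the concept with extent `cl{(x,y)}` and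
intent `{(x,y)}'`. -/
def wedge {V1 V2 : Type*} [CompleteLattice V1] [CompleteLattice V2] (x : V1) (y : V2) :
    ConceptTensor V1 V2 where
  extent := lowerPolar (tensorRel V1 V2) (upperPolar (tensorRel V1 V2) {(x, y)})
  intent := upperPolar (tensorRel V1 V2) {(x, y)}
  upperPolar_extent := upperPolar_lowerPolar_upperPolar _ _
  lowerPolar_intent := rfl

/-- Two subsets of a complete lattice are mutually distributive: all families indexed
by a set `ι` satisfy the two distributivity laws. -/
def MutuallyDistrib {M : Type u} [CompleteLattice M] (X Y : Set M) : Prop :=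
  ∀ (ι : Type u) (x y : ι → M), (∀ i, x i ∈ X) → (∀ i, y i ∈ Y) →
    ((⨆ i, x i ⊓ y i) = ⨅ J : Set ι, ((⨆ j ∈ J, x j) ⊔ ⨆ k ∈ Jᶜ, y k)) ∧
    ((⨅ i, x i ⊔ y i) = ⨆ J : Set ι, ((⨅ j ∈ J, x j) ⊓ ⨅ k ∈ Jᶜ, y k))
lemma relImage_singleton' {X Y : Type*} (R : X → Y → Prop) (g : X) :
    relImage R {g} = {y | R g y} := by
  ext y; simp [relImage]

/-- For closed relations `R1 : K1 → K2`, `R2 : K2 → K3` with associated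
bonds `B1(g) := R1(g)'`, `B2(h) := R2(h)'`:
(i) `R1(A)' = ⋂_{a ∈ A} B1(a) = (B1)_•(A)` for every `A ⊆ G1`;
(ii) `(B2)_•(B1(g)') = ((R2 ∘ R1)(g))'` for every `g ∈ G1`;
hence the bond of `R2 ∘ R1` is the bond composite of `B1` and `B2`. -/
theorem bond_of_comp (K1 K2 K3 : FormalContext)
    (R1 : K1.G → K2.G → Prop) (R2 : K2.G → K3.G → Prop)
    (h1 : IsClosedRel K1 K2 R1) (h2 : IsClosedRel K2 K3 R2)
    (B1 : K1.G → K2.M → Prop) (B2 : K2.G → K3.M → Prop)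
    (hB1 : ∀ g m, B1 g m ↔ m ∈ K2.polarG (relImage R1 {g}))
    (hB2 : ∀ h m, B2 h m ↔ m ∈ K3.polarG (relImage R2 {h})) :
    (∀ A : Set K1.G,
      K2.polarG (relImage R1 A) = (⋂ a ∈ A, relImage B1 {a}) ∧
      K2.polarG (relImage R1 A) = relLower B1 A) ∧
    (∀ g : K1.G,
      relLower B2 (K2.polarM (relImage B1 {g})) =
        K3.polarG (relImage (relComp K3 R2 R1) {g})) := by
  have key : ∀ A : Set K1.G, K2.polarG (relImage R1 A) = relLower B1 A := by
    intro A
    ext m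
    simp only [FormalContext.polarG, upperPolar, relLower, mem_setOf_eq]
    constructor
    · intro h a ha
      rw [hB1, relImage_singleton']
      intro x hx
      exact h ⟨a, ha, hx⟩
    · rintro h x ⟨a, ha, hR⟩
      have := h a ha
      rw [hB1, relImage_singleton'] at this
      exact this hR
  have iInterEq : ∀ A : Set K1.G, (⋂ a ∈ A, relImage B1 {a}) = relLower B1 A := by
    intro A
    ext m
    simp only [mem_iInter, relImage_singleton', relLower, mem_setOf_eq]
  refine ⟨fun A => ⟨by rw [key, iInterEq], key A⟩, fun g => ?_⟩
  have hrow : K2.clG (relImage R1 {g}) = relImage R1 {g} := h1.row_closed g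
  have hpm : K2.polarM (relImage B1 {g}) = relImage R1 {g} := by
    have heq : relImage B1 {g} = K2.polarG (relImage R1 {g}) := by
      rw [relImage_singleton']
      ext m
      rw [mem_setOf_eq, hB1]
    rw [heq]; exact hrow
  rw [hpm]
  have hRHS : relImage (relComp K3 R2 R1) {g} =
      K3.clG (relImage R2 (relImage R1 {g})) := by
    rw [relImage_singleton']; rfl
  rw [hRHS]
  have hpolcl : K3.polarG (K3.clG (relImage R2 (relImage R1 {g}))) =
      K3.polarG (relImage R2 (relImage R1 {g})) :=
    upperPolar_lowerPolar_upperPolar K3.I _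
  rw [hpolcl]
  ext m
  simp only [relLower, FormalContext.polarG, upperPolar, mem_setOf_eq]
  constructor
  · rintro h x ⟨y, hy, hR2⟩
    have := h y hy
    rw [hB2, relImage_singleton'] at this
    exact this hR2
  · intro h x hx
    rw [hB2, relImage_singleton']
    intro z hz
    exact h ⟨x, hx, hz⟩
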